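/- In a partially additive field, the dimensions (equivalence classes of mutually summable elements) form a commutative group under the induced multiplication, isomorphic to the quotient of the multiplicative group of non-zero elements by the subgroup of non-zero dimensionless elements. -/
import Mathlib


/-- A partially additive field: partial addition (modeled via `Option`, `none` = undefined),
total multiplication, per-element zeros, etc. -/
structure PAF (Q : Type*) where
  add : Q → Q → Option Q
  mul : Q → Q → Q
  zero : Q → Q
  one : Q
  neg : Q → Q
  inv : Q → Q
  add_comm : ∀ a b, add a b = add b a
  mul_comm : ∀ a b, mul a b = mul b a
  add_assoc : ∀ a b c, (add a b).bind (fun x => add x c) = (add b c).bind (fun x => add a x)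
  mul_assoc : ∀ a b c, mul (mul a b) c = mul a (mul b c)
  left_distrib : ∀ a b c, (add b c).map (mul a) = add (mul a b) (mul a c)
  add_zero : ∀ a, add a (zero a) = some a
  zero_unique : ∀ a z, add a z = some a → z = zero a
  mul_one : ∀ a, mul a one = a
  add_neg : ∀ a, add a (neg a) = some (zero a)
  mul_inv : ∀ a, (¬ ∃ b, a = zero b) → mul a (inv a) = one
  nontrivial : ∀ a b, a = zero b → ∃ c, (¬ ∃ d, c = zero d) ∧ a = zero c

namespace PAF
variable {Q : Type*} (F : PAF Q)

/-- `a` is a zero element. -/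
def IsZero (a : Q) : Prop := ∃ b, a = F.zero b

/-- `a` and `b` are summable (their sum is defined). -/
def Summable (a b : Q) : Prop := (F.add a b).isSome

/-- `a` is dimensionless iff it is summable with `1`. -/
def Dimensionless (a : Q) : Prop := F.Summable a F.one

/-- `n`-th power via the total multiplication. -/
def pow (a : Q) : ℕ → Q
  | 0 => F.one
  | n + 1 => F.mul a (pow a n)

end PAF

namespace PAF
variable {Q : Type*} {F : PAF Q}

theorem zero_eq_of_summable {a b : Q} (h : F.Summable a b) : F.zero a = F.zero b := by
  obtain ⟨t, ht⟩ := Option.isSome_iff_exists.mp h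
  have hba : F.add b a = some t := (F.add_comm b a).trans ht
  have h1 := F.add_assoc a b (F.zero b)
  rw [ht, F.add_zero] at h1
  simp only [Option.bind_some] at h1
  rw [ht] at h1
  have hz1 : F.zero b = F.zero t := F.zero_unique t _ h1
  have h2 := F.add_assoc b a (F.zero a)
  rw [hba, F.add_zero] at h2
  simp only [Option.bind_some] at h2
  rw [hba] at h2
  have hz2 : F.zero a = F.zero t := F.zero_unique t _ h2
  rw [hz1, hz2]

theorem summable_of_zero_eq {a b : Q} (h : F.zero a = F.zero b) : F.Summable a b := by
  have h1 := F.add_assoc a b (F.neg b)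
  rw [F.add_neg] at h1
  simp only [Option.bind_some] at h1
  rw [← h, F.add_zero] at h1
  rcases hab : F.add a b with _ | t
  · rw [hab] at h1; simp at h1
  · simp [Summable, hab]

theorem summable_iff {a b : Q} : F.Summable a b ↔ F.zero a = F.zero b :=
  ⟨zero_eq_of_summable, summable_of_zero_eq⟩

theorem summable_refl (a : Q) : F.Summable a a := summable_of_zero_eq rfl

theorem summable_symm {a b : Q} (h : F.Summable a b) : F.Summable b a :=
  summable_of_zero_eq (zero_eq_of_summable h).symm

theorem summable_trans {a b c : Q} (h : F.Summable a b) (h' : F.Summable b c) :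
    F.Summable a c :=
  summable_of_zero_eq ((zero_eq_of_summable h).trans (zero_eq_of_summable h'))

theorem mul_zero' (x d : Q) : F.mul x (F.zero d) = F.zero (F.mul x d) := by
  have h := F.left_distrib x d (F.zero d)
  rw [F.add_zero] at h
  simp only [Option.map_some] at h
  exact F.zero_unique _ _ h.symm

theorem summable_mul {a b : Q} (x : Q) (h : F.Summable a b) :
    F.Summable (F.mul x a) (F.mul x b) := by
  refine summable_of_zero_eq ?_
  rw [← mul_zero', ← mul_zero', zero_eq_of_summable h]

theorem summable_mul₂ {a b c d : Q} (h : F.Summable a b) (h' : F.Summable c d) :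
    F.Summable (F.mul a c) (F.mul b d) := by
  refine summable_trans (summable_mul a h') ?_
  rw [F.mul_comm a d, F.mul_comm b d]
  exact summable_mul d h

theorem one_nonzero : ¬ F.IsZero F.one := by
  rintro ⟨b, hb⟩
  obtain ⟨c, hc, hc2⟩ := F.nontrivial F.one b hb
  apply hc
  refine ⟨F.mul c c, ?_⟩
  conv_lhs => rw [← F.mul_one c, hc2, mul_zero']

theorem mul_nonzero {a b : Q} (ha : ¬ F.IsZero a) (hb : ¬ F.IsZero b) :
    ¬ F.IsZero (F.mul a b) := by
  rintro ⟨d, hd⟩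
  apply one_nonzero (F := F)
  refine ⟨F.mul (F.mul (F.inv b) (F.inv a)) d, ?_⟩
  have key : F.mul (F.mul (F.inv b) (F.inv a)) (F.mul a b) = F.one := by
    rw [F.mul_assoc, F.mul_comm a b, ← F.mul_assoc (F.inv a), F.mul_comm (F.inv a) b,
      F.mul_assoc b, F.mul_comm (F.inv a) a, F.mul_inv a ha, F.mul_one, F.mul_comm,
      F.mul_inv b hb]
  rw [← key, hd, mul_zero']

theorem inv_nonzero {a : Q} (ha : ¬ F.IsZero a) : ¬ F.IsZero (F.inv a) := by
  rintro ⟨d, hd⟩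
  apply one_nonzero (F := F)
  refine ⟨F.mul a d, ?_⟩
  rw [← F.mul_inv a ha, hd, mul_zero']

end PAF


namespace PAF
variable {Q : Type*} (F : PAF Q)

def toSetoid : Setoid Q :=
  ⟨F.Summable, ⟨summable_refl, summable_symm, summable_trans⟩⟩

theorem exists_nonzero_rep (q : Quotient F.toSetoid) :
    ∃ c : Q, ¬ F.IsZero c ∧ Quotient.mk F.toSetoid c = q := by
  obtain ⟨a, rfl⟩ := Quotient.exists_rep q
  by_cases ha : F.IsZero a
  · obtain ⟨b, hb⟩ := ha
    obtain ⟨c, hc, hc2⟩ := F.nontrivial a b hb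
    refine ⟨c, fun h => hc h, ?_⟩
    refine Quotient.sound (summable_symm ?_)
    show F.Summable a c
    have : F.add a c = some c := by rw [hc2, F.add_comm, F.add_zero]
    simp [Summable, this]
  · exact ⟨a, ha, rfl⟩

noncomputable def instD : CommGroup (Quotient F.toSetoid) where
  mul := Quotient.lift₂ (fun a b => Quotient.mk F.toSetoid (F.mul a b))
    (fun _ _ _ _ h h' => Quotient.sound (summable_mul₂ h h'))
  one := Quotient.mk F.toSetoid F.one
  inv q := Quotient.mk F.toSetoid (F.inv (Classical.choose (exists_nonzero_rep F q)))
  mul_assoc a b c := by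
    refine Quotient.inductionOn₃ a b c (fun a b c => ?_)
    exact congrArg (Quotient.mk _) (F.mul_assoc a b c)
  mul_comm a b := by
    refine Quotient.inductionOn₂ a b (fun a b => ?_)
    exact congrArg (Quotient.mk _) (F.mul_comm a b)
  one_mul a := by
    refine Quotient.inductionOn a (fun a => ?_)
    exact congrArg (Quotient.mk _) ((F.mul_comm _ _).trans (F.mul_one a))
  mul_one a := by
    refine Quotient.inductionOn a (fun a => ?_)
    exact congrArg (Quotient.mk _) (F.mul_one a)
  inv_mul_cancel q := by
    obtain ⟨hc, hq⟩ := Classical.choose_spec (exists_nonzero_rep F q)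
    set c := Classical.choose (exists_nonzero_rep F q)
    show Quotient.lift₂ _ _ (Quotient.mk F.toSetoid (F.inv c)) q = Quotient.mk F.toSetoid F.one
    rw [← hq]
    exact congrArg (Quotient.mk _) ((F.mul_comm _ _).trans (F.mul_inv c hc))

def instG : CommGroup {a : Q // ¬ F.IsZero a} where
  mul x y := ⟨F.mul x.1 y.1, mul_nonzero x.2 y.2⟩
  one := ⟨F.one, one_nonzero⟩
  inv x := ⟨F.inv x.1, inv_nonzero x.2⟩
  mul_assoc a b c := Subtype.ext (F.mul_assoc a.1 b.1 c.1)
  mul_comm a b := Subtype.ext (F.mul_comm a.1 b.1)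
  one_mul a := Subtype.ext ((F.mul_comm _ _).trans (F.mul_one a.1))
  mul_one a := Subtype.ext (F.mul_one a.1)
  inv_mul_cancel a := Subtype.ext ((F.mul_comm _ _).trans (F.mul_inv a.1 a.2))

end PAF

/-- Dimensions (summability classes) form a commutative group under the induced multiplication,
isomorphic to the quotient of the group of non-zero elements by the non-zero dimensionless ones. -/
theorem dimensions_comm_group {Q : Type*} (F : PAF Q) :
    ∃ s : Setoid Q, (∀ a b : Q, s.r a b ↔ F.Summable a b) ∧
    ∃ instD : CommGroup (Quotient s),
    ∃ instG : CommGroup {a : Q // ¬ F.IsZero a},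
      letI := instD
      letI := instG
      (∀ a b : Q, Quotient.mk s a * Quotient.mk s b = Quotient.mk s (F.mul a b)) ∧
      (∀ x y : {a : Q // ¬ F.IsZero a}, (x * y).1 = F.mul x.1 y.1) ∧
      ∃ H : Subgroup {a : Q // ¬ F.IsZero a},
        (∀ x : {a : Q // ¬ F.IsZero a}, x ∈ H ↔ F.Dimensionless x.1) ∧
        Nonempty (Quotient s ≃* ({a : Q // ¬ F.IsZero a} ⧸ H)) := by
  refine ⟨F.toSetoid, fun a b => Iff.rfl, F.instD, F.instG, fun a b => rfl, fun x y => rfl, ?_⟩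
  letI := F.instD
  letI := F.instG
  let φ : {a : Q // ¬ F.IsZero a} →* Quotient F.toSetoid :=
    { toFun := fun x => Quotient.mk F.toSetoid x.1
      map_one' := rfl
      map_mul' := fun x y => rfl }
  have hsurj : Function.Surjective φ := by
    intro q
    obtain ⟨c, hc, hq⟩ := PAF.exists_nonzero_rep F q
    exact ⟨⟨c, hc⟩, hq⟩
  refine ⟨φ.ker, ?_, ⟨(QuotientGroup.quotientKerEquivOfSurjective φ hsurj).symm⟩⟩
  intro x
  show Quotient.mk F.toSetoid x.1 = Quotient.mk F.toSetoid F.one ↔ _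
  rw [Quotient.eq]
  exact Iff.rfl
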